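/- There exists a flat EL disunification problem that has a (ground) solution but no local solution. Concretely, Γ = {X ⊑? B, A ⊓ B ⊓ C ⊑? X, ∃r.X ⊑? Y, ⊤ ⋢? Y, Y ⋢? ∃r.B} with variables X, Y and constants A, B, C is solved by σ(X) := A ⊓ B ⊓ C, σ(Y) := ∃r.(A ⊓ C), but no local substitution w.r.t. Γ solves Γ. -/

import Mathlib

inductive EL (N R : Type) : Type where
  | name : N → EL N R
  | top  : EL N R
  | conj : EL N R → EL N R → EL N R
  | ex   : R → EL N R → EL N R

structure Interp (N R : Type) where
  dom : Type
  nonempty : Nonempty dom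
  cname : N → Set dom
  role : R → Set (dom × dom)

def Interp.sem {N R : Type} (I : Interp N R) : EL N R → Set I.dom
  | .name A => I.cname A
  | .top => Set.univ
  | .conj C D => I.sem C ∩ I.sem D
  | .ex r C => {x | ∃ y, (x, y) ∈ I.role r ∧ y ∈ I.sem C}

/-- Semantic subsumption: `C ⊑ D` iff `C^I ⊆ D^I` for every interpretation `I`. -/
def Subsume {N R : Type} (C D : EL N R) : Prop :=
  ∀ I : Interp N R, I.sem C ⊆ I.sem D

/-- An atom is a concept name or an existential restriction. -/
def IsAtomEL {N R : Type} : EL N R → Prop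
  | .name _ => True
  | .ex _ _ => True
  | _ => False

/-- Top-level atoms of a concept term. -/
def tla {N R : Type} : EL N R → List (EL N R)
  | .conj C D => tla C ++ tla D
  | .top => []
  | .name A => [EL.name A]
  | .ex r C => [EL.ex r C]

/-- Conjunction of a nonempty list of terms `C :: Cs` (no extra ⊤ conjunct). -/
def conjs {N R : Type} : EL N R → List (EL N R) → EL N R
  | C, [] => C
  | C, D :: Ds => .conj C (conjs D Ds)

/-- Conjunction of a list of terms; the empty conjunction is ⊤. -/
def conjList {N R : Type} : List (EL N R) → EL N R
  | [] => .top
  | C :: Cs => conjs C Cs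

/-- Symbol count: each concept name (and ⊤) is one symbol, each `∃r.` is one symbol. -/
def sizeEL {N R : Type} : EL N R → ℕ
  | .name _ => 1
  | .top => 1
  | .conj C D => sizeEL C + sizeEL D + 1
  | .ex _ C => sizeEL C + 1

/-- Groundness: no occurrence of a variable (names are `V ⊕ K`, variables on the left). -/
def isGround {V K R : Type} : EL (V ⊕ K) R → Prop
  | .name (Sum.inl _) => False
  | .name (Sum.inr _) => True
  | .top => True
  | .conj C D => isGround C ∧ isGround D
  | .ex _ C => isGround C

/-- Application of a substitution `σ : V → EL (V ⊕ K) R` to a concept term. -/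
def applySub {V K R : Type} (σ : V → EL (V ⊕ K) R) : EL (V ⊕ K) R → EL (V ⊕ K) R
  | .name (Sum.inl X) => σ X
  | .name (Sum.inr A) => .name (Sum.inr A)
  | .top => .top
  | .conj C D => .conj (applySub σ C) (applySub σ D)
  | .ex r C => .ex r (applySub σ C)

/-- The variable `Y` occurs in the concept term. -/
def occursVar {V K R : Type} (Y : V) : EL (V ⊕ K) R → Prop
  | .name (Sum.inl X) => X = Y
  | .name (Sum.inr _) => False
  | .top => False
  | .conj C D => occursVar Y C ∨ occursVar Y D
  | .ex _ C => occursVar Y C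

inductive Vt : Type | vX | vY
deriving DecidableEq

inductive Kt : Type | kA | kB | kC
deriving DecidableEq

inductive Rt : Type | r
deriving DecidableEq

abbrev Tm : Type := EL (Vt ⊕ Kt) Rt

def cA : Tm := EL.name (Sum.inr Kt.kA)
def cB : Tm := EL.name (Sum.inr Kt.kB)
def cC : Tm := EL.name (Sum.inr Kt.kC)
def tX : Tm := EL.name (Sum.inl Vt.vX)

/-- The non-variable atoms of Γ: A, B, C, ∃r.X, ∃r.B. -/
def Atnv : List Tm := [cA, cB, cC, EL.ex Rt.r tX, EL.ex Rt.r cB]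

/-- σ solves Γ = {X ⊑? B, A⊓B⊓C ⊑? X, ∃r.X ⊑? Y, ⊤ ⋢? Y, Y ⋢? ∃r.B}
(σ maps variables to ground terms). -/
def SolvesGamma (σ : Vt → Tm) : Prop :=
  (∀ v, isGround (σ v)) ∧
  Subsume (σ Vt.vX) cB ∧
  Subsume (EL.conj cA (EL.conj cB cC)) (σ Vt.vX) ∧
  Subsume (EL.ex Rt.r (σ Vt.vX)) (σ Vt.vY) ∧
  ¬ Subsume EL.top (σ Vt.vY) ∧
  ¬ Subsume (σ Vt.vY) (EL.ex Rt.r cB)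

/-- σ is local w.r.t. Γ: induced by an acyclic assignment into the
non-variable atoms of Γ. -/
def LocalSub (σ : Vt → Tm) : Prop :=
  ∃ S : Vt → List Tm,
    (∀ v, ∀ D ∈ S v, D ∈ Atnv) ∧
    (∀ v, ¬ Relation.TransGen (fun a b : Vt => ∃ D ∈ S a, occursVar b D) v v) ∧
    (∀ v, σ v = conjList ((S v).map (applySub σ)))

/-! A local substitution builds `σ(Y)` from atoms of `Γ`. `⊤ ⋢ σ(Y)` forces at least one atom `D`,
and every candidate fails: a concept name `D` cannot subsume `∃r.σ(X) ⊑ σ(Y)`, while `D = ∃r.X`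
or `D = ∃r.B` gives `σ(Y) ⊑ ∃r.B` because `σ(X) ⊑ B`. The ground solution escapes this by using
`∃r.(A ⊓ C)`, which is not an atom of `Γ`. -/

namespace Subsume

variable {N R : Type}

theorem refl (C : EL N R) : Subsume C C := fun _ _ h => h

theorem trans {C D E : EL N R} (h₁ : Subsume C D) (h₂ : Subsume D E) : Subsume C E :=
  fun I _ hx => h₂ I (h₁ I hx)

theorem ex {C D : EL N R} (r : R) (h : Subsume C D) : Subsume (.ex r C) (.ex r D) := by
  rintro I x ⟨y, hxy, hy⟩
  exact ⟨y, hxy, h I hy⟩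

end Subsume

section Semantics

variable {N R : Type}

theorem Interp.mem_sem_conjs (I : Interp N R) (C : EL N R) (L : List (EL N R)) (x : I.dom) :
    x ∈ I.sem (conjs C L) ↔ x ∈ I.sem C ∧ ∀ D ∈ L, x ∈ I.sem D := by
  induction L generalizing C with
  | nil => simp [conjs]
  | cons D Ds ih =>
    simp only [conjs, Interp.sem, Set.mem_inter_iff, ih, List.forall_mem_cons]

theorem conjList_subsume_of_mem {L : List (EL N R)} {D : EL N R} (hD : D ∈ L) :
    Subsume (conjList L) D := by
  intro I x hx
  cases L with
  | nil => cases hD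
  | cons C Cs =>
    obtain ⟨hC, hCs⟩ := (I.mem_sem_conjs C Cs x).1 hx
    rcases List.mem_cons.1 hD with rfl | hD
    · exact hC
    · exact hCs D hD

theorem Interp.mem_sem_of_forall {I : Interp N R} {x : I.dom} (hname : ∀ A, x ∈ I.cname A)
    (hrole : ∀ r, (x, x) ∈ I.role r) (C : EL N R) : x ∈ I.sem C := by
  induction C with
  | name A => exact hname A
  | top => trivial
  | conj C D ihC ihD => exact ⟨ihC, ihD⟩
  | ex r C ih => exact ⟨x, hrole r, ih⟩

theorem top_not_subsume_ex (r : R) (C : EL N R) : ¬ Subsume .top (.ex r C) := by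
  intro h
  let I : Interp N R := ⟨Unit, ⟨()⟩, fun _ => ∅, fun _ => ∅⟩
  obtain ⟨_, hrole, -⟩ := h I (Set.mem_univ ())
  exact hrole

theorem ex_not_subsume_name (r : R) (C : EL N R) (A : N) : ¬ Subsume (.ex r C) (.name A) := by
  intro h
  let I : Interp N R := ⟨Bool, ⟨true⟩, fun _ => {true}, fun _ => Set.univ⟩
  have htrue : true ∈ I.sem C := I.mem_sem_of_forall (fun _ => rfl) (fun _ => trivial) C
  exact Bool.false_ne_true (h I ⟨true, trivial, htrue⟩)

end Semantics

theorem solvesGamma_of_eq {σ : Vt → Tm} (hX : σ Vt.vX = EL.conj cA (EL.conj cB cC))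
    (hY : σ Vt.vY = EL.ex Rt.r (EL.conj cA cC)) : SolvesGamma σ := by
  refine ⟨?_, ?_, hX ▸ Subsume.refl _, ?_, hY ▸ top_not_subsume_ex _ _, ?_⟩
  · rintro (_ | _)
    · rw [hX]
      exact ⟨trivial, trivial, trivial⟩
    · rw [hY]
      exact ⟨trivial, trivial⟩
  · rw [hX]
    rintro I x ⟨-, hB, -⟩
    exact hB
  · rw [hX, hY]
    rintro I x ⟨y, hxy, hA, -, hC⟩
    exact ⟨y, hxy, hA, hC⟩
  · rw [hY]
    intro h
    let I : Interp (Vt ⊕ Kt) Rt :=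
      ⟨Unit, ⟨()⟩, fun n => if n = Sum.inr Kt.kB then ∅ else Set.univ, fun _ => Set.univ⟩
    obtain ⟨_, -, hB⟩ :=
      h I (a := ()) ⟨(), trivial, by simp [I, Interp.sem, cA], by simp [I, Interp.sem, cC]⟩
    simp [I, Interp.sem, cB] at hB

theorem LocalSub.not_solvesGamma {σ : Vt → Tm} (hσ : LocalSub σ) : ¬ SolvesGamma σ := by
  obtain ⟨S, hSatoms, -, hσS⟩ := hσ
  rintro ⟨-, hXB, -, hXY, htopY, hYB⟩
  obtain ⟨D, hD⟩ : ∃ D, D ∈ S Vt.vY := by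
    refine List.exists_mem_of_ne_nil _ fun hnil => htopY ?_
    rw [hσS Vt.vY, hnil]
    exact Subsume.refl _
  have hYD : Subsume (σ Vt.vY) (applySub σ D) := by
    rw [hσS Vt.vY]
    exact conjList_subsume_of_mem (List.mem_map_of_mem hD)
  have hDatom := hSatoms Vt.vY D hD
  simp only [Atnv, List.mem_cons, List.not_mem_nil, or_false] at hDatom
  rcases hDatom with rfl | rfl | rfl | rfl | rfl
  · exact ex_not_subsume_name _ _ _ (hXY.trans hYD)
  · exact ex_not_subsume_name _ _ _ (hXY.trans hYD)
  · exact ex_not_subsume_name _ _ _ (hXY.trans hYD)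
  · exact hYB (hYD.trans (hXB.ex Rt.r))
  · exact hYB hYD

theorem stmt18 :
    SolvesGamma (fun v => match v with
      | Vt.vX => EL.conj cA (EL.conj cB cC)
      | Vt.vY => EL.ex Rt.r (EL.conj cA cC)) ∧
    ∀ σ : Vt → Tm, LocalSub σ → ¬ SolvesGamma σ :=
  ⟨solvesGamma_of_eq rfl rfl, fun _ => LocalSub.not_solvesGamma⟩
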